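/- arXiv:2104.10023 — 2 statements merged into one kernel-verified Lean document; each statement's English description precedes it below -/
import Mathlib

section
/- For every prime p with p ≡ 3 (mod 4) and every integer n with gcd(n,p) = 1, one has the exact identity Σ_{χ mod p} |G(n,χ;p)|⁶ = (p−1)(10p³ − 25p² − 4p − 1), where the sum is over all Dirichlet characters χ modulo p (including the principal character). -/
/-!
Write `e` for the standard additive character of `ZMod p`, `m` for `n mod p`, `η` for the
Legendre symbol and `g` for its Gauss sum. Since `χ 0 = 0`, `G(n,χ;p) = Σ_u χ(u) e(m u²)` over
the units, so `|G|² = Σ_x χ(x) K(x)` with `K` the autocorrelation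
`K(x) = Σ_v e(m (x² - 1) v²)`. Cubing and summing over `χ`, orthogonality leaves
`(p - 1) Σ_{xyz=1} K(x) K(y) K(z)`. Evaluating the quadratic exponential sum gives
`K(x) = -1 + η(m) g η(x² - 1) + p [x² = 1]`, where `g² = -p` because `p ≡ 3 (mod 4)`.
For the same reason `η(-1) = -1`, so `x ↦ η(x² - 1)` changes sign under `x ↦ x⁻¹`; this kills
the terms of odd degree in it, and the others are elementary character sums.
-/

/-- The generalized quadratic Gauss sum `G(n,χ;p) = Σ_{a=1}^{p} χ(a)·e^{2πi·n·a²/p}`. -/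
noncomputable def gaussG (n : ℤ) (p : ℕ) (χ : DirichletCharacter ℂ p) : ℂ :=
  ∑ a ∈ Finset.Icc 1 p, χ a * Complex.exp (2 * Real.pi * Complex.I * n * (a : ℂ) ^ 2 / p)

open Finset ComplexConjugate

noncomputable def autocorrelation {G : Type*} [Group G] [Fintype G] (f : G → ℂ) (x : G) : ℂ :=
  ∑ v, f (v * x) * conj (f v)

namespace DirichletCharacter

variable {N : ℕ}

lemma conj_apply_unit (χ : DirichletCharacter ℂ N) (u : (ZMod N)ˣ) :
    conj (χ u) = χ ↑u⁻¹ := by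
  rw [← RCLike.star_def, MulChar.star_apply', MulChar.inv_apply, Ring.inverse_unit]

variable [NeZero N]

lemma sq_norm_sum_mul (χ : DirichletCharacter ℂ N) (f : (ZMod N)ˣ → ℂ) :
    ((‖∑ u : (ZMod N)ˣ, χ u * f u‖ ^ 2 : ℝ) : ℂ) =
      ∑ x : (ZMod N)ˣ, χ x * autocorrelation f x := by
  simp_rw [Complex.ofReal_pow, ← Complex.mul_conj', map_sum, sum_mul_sum, autocorrelation,
    mul_sum]
  rw [sum_comm]
  conv_rhs => rw [sum_comm]
  refine sum_congr rfl fun v _ => (Fintype.sum_equiv (Equiv.mulLeft v) _ _ fun x => ?_).symm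
  simp only [Equiv.coe_mulLeft, map_mul, conj_apply_unit]
  rw [mul_mul_mul_comm, ← map_mul, ← Units.val_mul, mul_comm v x, mul_inv_cancel_right]

lemma sum_sum_mul_pow_three (F : (ZMod N)ˣ → ℂ) :
    ∑ χ : DirichletCharacter ℂ N, (∑ u : (ZMod N)ˣ, χ u * F u) ^ 3 =
      N.totient * ∑ x : (ZMod N)ˣ, ∑ y : (ZMod N)ˣ, F x * F y * F (x * y)⁻¹ := by
  have hcube (χ : DirichletCharacter ℂ N) : (∑ u : (ZMod N)ˣ, χ u * F u) ^ 3 =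
      ∑ x : (ZMod N)ˣ, ∑ y : (ZMod N)ˣ, ∑ z : (ZMod N)ˣ,
        χ ↑(x * y * z) * (F x * F y * F z) := by
    simp_rw [pow_three, sum_mul_sum, mul_sum, Units.val_mul, map_mul]
    exact sum_congr rfl fun x _ => sum_congr rfl fun y _ => sum_congr rfl fun z _ => by ring
  have horth (x y : (ZMod N)ˣ) : ∑ z : (ZMod N)ˣ, ∑ χ : DirichletCharacter ℂ N,
      χ ↑(x * y * z) * (F x * F y * F z) = N.totient * (F x * F y * F (x * y)⁻¹) := by
    simp only [← sum_mul, sum_characters_eq, Units.val_eq_one, ite_mul, zero_mul,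
      mul_eq_one_iff_eq_inv', Fintype.sum_ite_eq']
  simp_rw [hcube, mul_sum]
  rw [sum_comm]
  refine sum_congr rfl fun x _ => ?_
  rw [sum_comm]
  refine sum_congr rfl fun y _ => ?_
  rw [sum_comm, horth]

end DirichletCharacter

section SquareIndicator

variable {F : Type*} [Field F] [DecidableEq F]

variable (F) in
noncomputable def indicatorSqEqOne (x : Fˣ) : ℂ := if (x : F) ^ 2 = 1 then 1 else 0

lemma indicatorSqEqOne_one : indicatorSqEqOne F 1 = 1 := by
  rw [indicatorSqEqOne, if_pos (by rw [Units.val_one, one_pow])]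

lemma indicatorSqEqOne_neg (x : Fˣ) : indicatorSqEqOne F (-x) = indicatorSqEqOne F x := by
  rw [indicatorSqEqOne, indicatorSqEqOne, Units.val_neg, neg_sq]

lemma indicatorSqEqOne_inv (x : Fˣ) : indicatorSqEqOne F x⁻¹ = indicatorSqEqOne F x := by
  simp only [indicatorSqEqOne, Units.val_inv_eq_inv_val, inv_pow, inv_eq_one]

lemma sum_indicatorSqEqOne_mul [Fintype F] (hF : ringChar F ≠ 2) (f : Fˣ → ℂ) :
    ∑ x, indicatorSqEqOne F x * f x = f 1 + f (-1) := by
  have hne : (1 : Fˣ) ≠ -1 := by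
    rw [Ne, Units.ext_iff, Units.val_neg, Units.val_one]
    exact (Ring.neg_one_ne_one_of_char_ne_two hF).symm
  have hsq : ({x | (x : F) ^ 2 = 1} : Finset Fˣ) = {1, -1} := by
    ext x
    simp only [mem_filter, mem_univ, true_and, mem_insert, mem_singleton, sq_eq_one_iff,
      Units.ext_iff, Units.val_neg, Units.val_one]
  simp only [indicatorSqEqOne, ite_mul, one_mul, zero_mul]
  rw [← sum_filter, hsq, sum_pair hne]

end SquareIndicator

section QuadraticExponentialSums

variable {F : Type*} [Field F] [Fintype F] [DecidableEq F]

variable (F) in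
noncomputable def complexQuadraticChar : MulChar F ℂ :=
  (quadraticChar F).ringHomComp (Int.castRingHom ℂ)

lemma complexQuadraticChar_apply (a : F) : complexQuadraticChar F a = quadraticChar F a := rfl

lemma complexQuadraticChar_sq_eq_one {a : F} (ha : a ≠ 0) :
    complexQuadraticChar F a ^ 2 = 1 := by
  rw [complexQuadraticChar_apply, ← Int.cast_pow, quadraticChar_sq_one ha, Int.cast_one]

lemma sum_units_eq_sum_sub {M : Type*} [AddCommGroup M] (f : F → M) :
    ∑ u : Fˣ, f u = ∑ x, f x - f 0 := by
  rw [Fintype.sum_eq_add_sum_compl 0 f, add_sub_cancel_left,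
    sum_subtype {0}ᶜ (p := fun x : F => x ≠ 0) (by simp)]
  exact Fintype.sum_equiv unitsEquivNeZero _ _ fun _ => rfl

lemma card_units_eq_card_sub_one : (Fintype.card Fˣ : ℂ) = Fintype.card F - 1 := by
  rw [Fintype.card_units, Nat.cast_sub Fintype.card_pos, Nat.cast_one]

lemma sum_comp_sq (hF : ringChar F ≠ 2) {M : Type*} [AddCommGroup M] [Module ℂ M] (f : F → M) :
    ∑ x, f (x ^ 2) = ∑ a, (1 + complexQuadraticChar F a) • f a := by
  rw [← sum_fiberwise univ (· ^ 2)]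
  refine sum_congr rfl fun a _ => ?_
  have hcard : ((#{x | x ^ 2 = a} : ℕ) : ℂ) = 1 + complexQuadraticChar F a := by
    have := congrArg (Int.cast (R := ℂ)) (quadraticChar_card_sqrts hF a)
    push_cast at this
    rw [complexQuadraticChar_apply, add_comm, ← this]
    congr 2; ext; simp
  rw [sum_congr rfl fun x hx => by rw [(mem_filter.mp hx).2], sum_const, ← hcard,
    Nat.cast_smul_eq_nsmul]

lemma sum_addChar_mul_sq (hF : ringChar F ≠ 2) {ψ : AddChar F ℂ} (hψ : ψ.IsPrimitive)
    {t : F} (ht : t ≠ 0) :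
    ∑ x, ψ (t * x ^ 2) = complexQuadraticChar F t * gaussSum (complexQuadraticChar F) ψ := by
  have hshift := gaussSum_mulShift (complexQuadraticChar F) ψ (Units.mk0 t ht)
  rw [sum_comp_sq hF (fun a => ψ (t * a))]
  simp only [smul_eq_mul, add_mul, one_mul, sum_add_distrib]
  rw [← hshift, Units.val_mk0, ← mul_assoc, ← sq, complexQuadraticChar_sq_eq_one ht, one_mul]
  simp [gaussSum, AddChar.mulShift_apply, mul_comm t, AddChar.sum_mulShift _ hψ, ht]

lemma sum_units_addChar_mul_sq (hF : ringChar F ≠ 2) {ψ : AddChar F ℂ} (hψ : ψ.IsPrimitive)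
    {t : F} (ht : t ≠ 0) :
    ∑ u : Fˣ, ψ (t * u ^ 2) =
      complexQuadraticChar F t * gaussSum (complexQuadraticChar F) ψ - 1 := by
  rw [sum_units_eq_sum_sub (fun x => ψ (t * x ^ 2)), sum_addChar_mul_sq hF hψ ht]
  simp

end QuadraticExponentialSums

section CardModFourEqThree

variable {F : Type*} [Field F] [Fintype F]

lemma ringChar_ne_two_of_card_mod_four (hF : Fintype.card F % 4 = 3) : ringChar F ≠ 2 := by
  rw [Ne, FiniteField.even_card_iff_char_two]
  omega

variable [DecidableEq F]

lemma complexQuadraticChar_neg_one (hF : Fintype.card F % 4 = 3) :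
    complexQuadraticChar F (-1) = -1 := by
  rw [complexQuadraticChar_apply, quadraticChar_neg_one (ringChar_ne_two_of_card_mod_four hF),
    ZMod.χ₄_nat_three_mod_four hF, Int.cast_neg, Int.cast_one]

lemma gaussSum_complexQuadraticChar_sq (hF : Fintype.card F % 4 = 3) {ψ : AddChar F ℂ}
    (hψ : ψ.IsPrimitive) :
    gaussSum (complexQuadraticChar F) ψ ^ 2 = -Fintype.card F := by
  have hne : complexQuadraticChar F ≠ 1 := by
    rw [complexQuadraticChar, MulChar.ringHomComp_ne_one_iff Int.cast_injective]
    exact quadraticChar_ne_one (ringChar_ne_two_of_card_mod_four hF)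
  rw [gaussSum_sq hne ((quadraticChar_isQuadratic F).comp _) hψ,
    complexQuadraticChar_neg_one hF, neg_one_mul]

variable (F) in
noncomputable def charSqSubOne (x : Fˣ) : ℂ := complexQuadraticChar F ((x : F) ^ 2 - 1)

lemma charSqSubOne_of_sq_eq_one {x : Fˣ} (hx : (x : F) ^ 2 = 1) : charSqSubOne F x = 0 := by
  rw [charSqSubOne, hx, sub_self, MulChar.map_zero]

lemma charSqSubOne_one : charSqSubOne F 1 = 0 :=
  charSqSubOne_of_sq_eq_one (by rw [Units.val_one, one_pow])

lemma charSqSubOne_neg (x : Fˣ) : charSqSubOne F (-x) = charSqSubOne F x := by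
  rw [charSqSubOne, charSqSubOne, Units.val_neg, neg_sq]

lemma charSqSubOne_inv (hF : Fintype.card F % 4 = 3) (x : Fˣ) :
    charSqSubOne F x⁻¹ = -charSqSubOne F x := by
  have hx : (x : F) ≠ 0 := x.ne_zero
  have hsq : ((x⁻¹ : Fˣ) : F) ^ 2 - 1 = (x : F)⁻¹ ^ 2 * (-1) * ((x : F) ^ 2 - 1) := by
    rw [Units.val_inv_eq_inv_val]
    field_simp
    ring
  rw [charSqSubOne, charSqSubOne, hsq, map_mul, map_mul, complexQuadraticChar_neg_one hF,
    map_pow, complexQuadraticChar_sq_eq_one (inv_ne_zero hx), one_mul, neg_one_mul]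

lemma charSqSubOne_sq (x : Fˣ) : charSqSubOne F x ^ 2 = 1 - indicatorSqEqOne F x := by
  by_cases hx : (x : F) ^ 2 = 1
  · rw [charSqSubOne_of_sq_eq_one hx, indicatorSqEqOne, if_pos hx]
    ring
  · rw [charSqSubOne, indicatorSqEqOne, if_neg hx,
      complexQuadraticChar_sq_eq_one (sub_ne_zero.mpr hx), sub_zero]

lemma autocorrelation_addChar_mul_sq (hF : Fintype.card F % 4 = 3) {ψ : AddChar F ℂ}
    (hψ : ψ.IsPrimitive) {t : F} (ht : t ≠ 0) (x : Fˣ) :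
    autocorrelation (fun u : Fˣ => ψ (t * u ^ 2)) x =
      -1 + complexQuadraticChar F t * gaussSum (complexQuadraticChar F) ψ * charSqSubOne F x +
        Fintype.card F * indicatorSqEqOne F x := by
  have hsum : autocorrelation (fun u : Fˣ => ψ (t * u ^ 2)) x =
      ∑ v : Fˣ, ψ (t * ((x : F) ^ 2 - 1) * v ^ 2) := by
    refine sum_congr rfl fun v _ => ?_
    rw [← AddChar.map_neg_eq_conj, ← AddChar.map_add_eq_mul, Units.val_mul]
    ring_nf
  rw [hsum]
  by_cases hx : (x : F) ^ 2 = 1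
  · simp only [hx, sub_self, mul_zero, zero_mul, AddChar.map_zero_eq_one, sum_const, card_univ,
      nsmul_one, card_units_eq_card_sub_one, charSqSubOne_of_sq_eq_one hx, indicatorSqEqOne,
      if_true]
    ring
  · rw [sum_units_addChar_mul_sq (ringChar_ne_two_of_card_mod_four hF) hψ
      (mul_ne_zero ht (sub_ne_zero.mpr hx)), map_mul, charSqSubOne, indicatorSqEqOne, if_neg hx]
    ring

end CardModFourEqThree

section SumEvaluation

variable {F : Type*} [Field F] [Fintype F] [DecidableEq F]

lemma sum_indicatorSqEqOne (hF : ringChar F ≠ 2) : ∑ x : Fˣ, indicatorSqEqOne F x = 2 := by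
  simpa [one_add_one_eq_two] using sum_indicatorSqEqOne_mul hF (fun _ => 1)

lemma sum_indicatorSqEqOne_mul_left (hF : ringChar F ≠ 2) (x : Fˣ) :
    ∑ y, indicatorSqEqOne F (x * y) = 2 :=
  (Equiv.sum_comp (Equiv.mulLeft x) _).trans (sum_indicatorSqEqOne hF)

lemma sum_mul_indicatorSqEqOne_mul_left (hF : ringChar F ≠ 2) (f : Fˣ → ℂ) (x : Fˣ) :
    ∑ y, f y * indicatorSqEqOne F (x * y) = f x⁻¹ + f (-x⁻¹) := by
  rw [← Equiv.sum_comp (Equiv.mulLeft x⁻¹)]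
  simp only [Equiv.coe_mulLeft, mul_inv_cancel_left]
  simpa [mul_comm] using sum_indicatorSqEqOne_mul hF (fun y => f (x⁻¹ * y))

lemma sum_charSqSubOne (hF : Fintype.card F % 4 = 3) : ∑ x : Fˣ, charSqSubOne F x = 0 := by
  have h := Equiv.sum_comp (Equiv.inv Fˣ) (charSqSubOne F)
  simp only [Equiv.inv_apply, charSqSubOne_inv hF, sum_neg_distrib] at h
  linear_combination -h / 2

lemma sum_charSqSubOne_mul_left (hF : Fintype.card F % 4 = 3) (x : Fˣ) :
    ∑ y, charSqSubOne F (x * y) = 0 :=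
  (Equiv.sum_comp (Equiv.mulLeft x) _).trans (sum_charSqSubOne hF)

lemma sum_charSqSubOne_mul_sum (hF : Fintype.card F % 4 = 3) :
    ∑ x : Fˣ, charSqSubOne F x * ∑ y, charSqSubOne F y * charSqSubOne F (x * y) = 0 := by
  simp_rw [mul_sum, ← mul_assoc]
  set T := ∑ x : Fˣ, ∑ y : Fˣ, charSqSubOne F x * charSqSubOne F y * charSqSubOne F (x * y)
  have h : T = -T := calc
    T = ∑ x : Fˣ, ∑ y : Fˣ,
        charSqSubOne F x⁻¹ * charSqSubOne F y⁻¹ * charSqSubOne F (x⁻¹ * y⁻¹) := by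
      rw [← Equiv.sum_comp (Equiv.inv Fˣ)]
      exact sum_congr rfl fun x _ => (Equiv.sum_comp (Equiv.inv Fˣ) _).symm
    _ = -T := by
      simp only [← mul_inv, charSqSubOne_inv hF, neg_mul, mul_neg, neg_neg, sum_neg_distrib, T]
  linear_combination h / 2

lemma sum_sum_charSqSubOne_mul_mul_left (hF : Fintype.card F % 4 = 3) :
    ∑ x : Fˣ, ∑ y, charSqSubOne F y * charSqSubOne F (x * y) = 0 := by
  rw [sum_comm]
  refine sum_eq_zero fun y _ => ?_
  simp_rw [← mul_sum, mul_comm _ y, sum_charSqSubOne_mul_left hF, mul_zero]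

lemma sum_charSqSubOne_mul_self (hF : Fintype.card F % 4 = 3) :
    ∑ x : Fˣ, charSqSubOne F x * charSqSubOne F x = Fintype.card F - 3 := by
  simp only [← sq, charSqSubOne_sq, sum_sub_distrib, sum_const, card_univ, nsmul_one,
    card_units_eq_card_sub_one, sum_indicatorSqEqOne (ringChar_ne_two_of_card_mod_four hF)]
  ring

variable {β : ℂ} {K : Fˣ → ℂ}

lemma sum_mul_apply_mul_inv_eq (hF : Fintype.card F % 4 = 3)
    (hβ : β ^ 2 = -Fintype.card F)
    (hK : ∀ x, K x = -1 + β * charSqSubOne F x + Fintype.card F * indicatorSqEqOne F x)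
    (x : Fˣ) :
    ∑ y, K y * K (x * y)⁻¹ =
      -(3 * Fintype.card F + 1) +
        Fintype.card F * ∑ y, charSqSubOne F y * charSqSubOne F (x * y) -
        4 * Fintype.card F * β * charSqSubOne F x +
        2 * (Fintype.card F : ℂ) ^ 2 * indicatorSqEqOne F x := by
  have hF2 := ringChar_ne_two_of_card_mod_four hF
  have hexpand (y : Fˣ) : K y * K (x * y)⁻¹ =
      1 + β * charSqSubOne F (x * y) - Fintype.card F * indicatorSqEqOne F (x * y) -
        β * charSqSubOne F y - β ^ 2 * (charSqSubOne F y * charSqSubOne F (x * y)) +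
        β * Fintype.card F * (charSqSubOne F y * indicatorSqEqOne F (x * y)) -
        Fintype.card F * indicatorSqEqOne F y -
        β * Fintype.card F * (indicatorSqEqOne F y * charSqSubOne F (x * y)) +
        (Fintype.card F : ℂ) ^ 2 * (indicatorSqEqOne F y * indicatorSqEqOne F (x * y)) := by
    rw [hK, hK, charSqSubOne_inv hF, indicatorSqEqOne_inv]
    ring
  simp only [hexpand, sum_add_distrib, sum_sub_distrib, ← mul_sum]
  rw [sum_mul_indicatorSqEqOne_mul_left hF2, sum_indicatorSqEqOne_mul hF2,
    sum_indicatorSqEqOne_mul hF2, sum_charSqSubOne_mul_left hF, sum_charSqSubOne hF,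
    sum_indicatorSqEqOne_mul_left hF2, sum_indicatorSqEqOne hF2, sum_const, card_univ, nsmul_one,
    card_units_eq_card_sub_one, mul_one, mul_neg_one, charSqSubOne_neg, charSqSubOne_neg,
    charSqSubOne_inv hF, indicatorSqEqOne_neg]
  linear_combination (-∑ y, charSqSubOne F y * charSqSubOne F (x * y)) * hβ

lemma sum_sum_mul_mul_apply_mul_inv_eq (hF : Fintype.card F % 4 = 3)
    (hβ : β ^ 2 = -Fintype.card F)
    (hK : ∀ x, K x = -1 + β * charSqSubOne F x + Fintype.card F * indicatorSqEqOne F x) :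
    ∑ x, ∑ y, K x * K y * K (x * y)⁻¹ =
      10 * (Fintype.card F : ℂ) ^ 3 - 25 * (Fintype.card F : ℂ) ^ 2 -
        4 * Fintype.card F - 1 := by
  have hF2 := ringChar_ne_two_of_card_mod_four hF
  simp_rw [mul_assoc, ← mul_sum, sum_mul_apply_mul_inv_eq hF hβ hK]
  have hexpand (x : Fˣ) : K x * (-(3 * Fintype.card F + 1) +
        Fintype.card F * ∑ y, charSqSubOne F y * charSqSubOne F (x * y) -
        4 * Fintype.card F * β * charSqSubOne F x +
        2 * (Fintype.card F : ℂ) ^ 2 * indicatorSqEqOne F x) =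
      (3 * Fintype.card F + 1) * 1 -
        Fintype.card F * ∑ y, charSqSubOne F y * charSqSubOne F (x * y) +
        (Fintype.card F - 1) * β * charSqSubOne F x -
        (5 * (Fintype.card F : ℂ) ^ 2 + Fintype.card F) * indicatorSqEqOne F x +
        Fintype.card F * β *
          (charSqSubOne F x * ∑ y, charSqSubOne F y * charSqSubOne F (x * y)) -
        4 * Fintype.card F * β ^ 2 * (charSqSubOne F x * charSqSubOne F x) +
        (Fintype.card F : ℂ) ^ 2 *
          (indicatorSqEqOne F x * ∑ y, charSqSubOne F y * charSqSubOne F (x * y)) +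
        -2 * (Fintype.card F : ℂ) ^ 2 * β * (indicatorSqEqOne F x * charSqSubOne F x) +
        2 * (Fintype.card F : ℂ) ^ 3 * (indicatorSqEqOne F x * indicatorSqEqOne F x) := by
    rw [hK]
    ring
  simp only [hexpand, sum_add_distrib, sum_sub_distrib, ← mul_sum]
  rw [sum_indicatorSqEqOne_mul hF2, sum_indicatorSqEqOne_mul hF2, sum_indicatorSqEqOne_mul hF2,
    sum_sum_charSqSubOne_mul_mul_left hF, sum_charSqSubOne_mul_sum hF,
    sum_charSqSubOne hF, sum_indicatorSqEqOne hF2]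
  simp only [one_mul, neg_one_mul, charSqSubOne_neg, indicatorSqEqOne_neg, charSqSubOne_one,
    indicatorSqEqOne_one, sum_charSqSubOne_mul_self hF, sum_const, card_univ, nsmul_one,
    card_units_eq_card_sub_one]
  linear_combination (-4 * (Fintype.card F : ℂ) * (Fintype.card F - 3)) * hβ

end SumEvaluation

section GaussG

variable {p : ℕ}

lemma sum_Icc_one_natCast [NeZero p] {M : Type*} [AddCommMonoid M] (f : ZMod p → M) :
    ∑ a ∈ Icc 1 p, f a = ∑ x, f x := by
  have hp := NeZero.pos p
  refine sum_nbij' (fun a => (a : ZMod p)) (fun x => if x = 0 then p else x.val)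
    (fun _ _ => mem_univ _) (fun x _ => ?_) (fun a ha => ?_) (fun x _ => ?_) (fun _ _ => rfl)
  · rw [mem_Icc]
    split_ifs with hx
    · omega
    · exact ⟨Nat.one_le_iff_ne_zero.mpr ((ZMod.val_ne_zero x).mpr hx), x.val_lt.le⟩
  · obtain ⟨h1, h2⟩ := mem_Icc.mp ha
    rcases h2.lt_or_eq with h2 | rfl
    · rw [if_neg, ZMod.val_natCast_of_lt h2]
      rw [ZMod.natCast_eq_zero_iff]
      exact Nat.not_dvd_of_pos_of_lt h1 h2
    · simp
  · split_ifs with hx <;> simp [hx]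

lemma gaussG_eq_sum_units [Fact p.Prime] (n : ℤ) (χ : DirichletCharacter ℂ p) :
    gaussG n p χ = ∑ u : (ZMod p)ˣ, χ u * ZMod.stdAddChar ((n : ZMod p) * (u : ZMod p) ^ 2) := by
  have hexp (a : ℕ) : Complex.exp (2 * Real.pi * Complex.I * n * (a : ℂ) ^ 2 / p) =
      ZMod.stdAddChar ((n : ZMod p) * (a : ZMod p) ^ 2) := by
    rw [show (n : ZMod p) * (a : ZMod p) ^ 2 = ((n * a ^ 2 : ℤ) : ZMod p) by push_cast; rfl,
      ZMod.stdAddChar_coe]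
    push_cast
    ring_nf
  simp_rw [gaussG, hexp]
  rw [sum_Icc_one_natCast (fun x => χ x * ZMod.stdAddChar ((n : ZMod p) * x ^ 2)),
    sum_units_eq_sum_sub (fun x => χ x * ZMod.stdAddChar ((n : ZMod p) * x ^ 2)),
    MulChar.map_zero, zero_mul, sub_zero]

end GaussG

/-- For every prime `p ≡ 3 (mod 4)` and every integer `n` coprime to `p`,
`Σ_{χ mod p} |G(n,χ;p)|⁶ = (p−1)(10p³ − 25p² − 4p − 1)`. -/
theorem statement_6 (p : ℕ) [Fact p.Prime] (hp : p % 4 = 3)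
    (n : ℤ) (hn : Int.gcd n p = 1) :
    (∑ χ : DirichletCharacter ℂ p, ‖gaussG n p χ‖ ^ 6)
      = ((p : ℝ) - 1) * (10 * (p : ℝ) ^ 3 - 25 * (p : ℝ) ^ 2 - 4 * (p : ℝ) - 1) := by
  have hcard : Fintype.card (ZMod p) % 4 = 3 := by rwa [ZMod.card]
  have hn0 : (n : ZMod p) ≠ 0 := ZMod.ne_zero_of_gcd_eq_one Fact.out hn
  set E : (ZMod p)ˣ → ℂ := fun u => ZMod.stdAddChar ((n : ZMod p) * (u : ZMod p) ^ 2)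
  have hsixth (χ : DirichletCharacter ℂ p) : ((‖gaussG n p χ‖ ^ 6 : ℝ) : ℂ) =
      (∑ x : (ZMod p)ˣ, χ x * autocorrelation E x) ^ 3 := by
    rw [gaussG_eq_sum_units, ← DirichletCharacter.sq_norm_sum_mul]
    push_cast
    ring
  apply Complex.ofReal_injective
  rw [Complex.ofReal_sum]
  simp_rw [hsixth]
  have hψ := ZMod.isPrimitive_stdAddChar p
  have hβ : (complexQuadraticChar (ZMod p) n * gaussSum (complexQuadraticChar (ZMod p))
      ZMod.stdAddChar) ^ 2 = -Fintype.card (ZMod p) := by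
    rw [mul_pow, complexQuadraticChar_sq_eq_one hn0, one_mul,
      gaussSum_complexQuadraticChar_sq hcard hψ]
  rw [DirichletCharacter.sum_sum_mul_pow_three,
    sum_sum_mul_mul_apply_mul_inv_eq hcard hβ (autocorrelation_addChar_mul_sq hcard hψ hn0),
    Nat.totient_prime Fact.out, ZMod.card]
  push_cast [Nat.cast_sub (Fact.out : p.Prime).one_le]
  ring
end

section
/- Let p be an odd prime and let χ be a non-principal even Dirichlet character modulo p (i.e., χ ≠ χ₀ and χ(−1) = 1). Then for every integer n with gcd(n,p) = 1, one has the identity |G(n,χ;p)|² = 2p + (n/p)·G(1;p)·Σ_{a=1}^{p-1} χ(a)·((a²−1)/p), where G(1;p) = Σ_{a=1}^{p} e^{2πi·a²/p}. -/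
open Finset

namespace ZMod

variable {N : ℕ} [NeZero N]

lemma sum_range_natCast {M : Type*} [AddCommMonoid M] (f : ZMod N → M) :
    ∑ a ∈ range N, f a = ∑ x, f x :=
  sum_nbij' (↑) val (fun _ _ => mem_univ _) (fun x _ => mem_range.2 x.val_lt)
    (fun _ ha => val_cast_of_lt (mem_range.1 ha)) (fun x _ => natCast_zmod_val x) fun _ _ => rfl

lemma add_sum_Ico_one_natCast {M : Type*} [AddCommMonoid M] (f : ZMod N → M) :
    f 0 + ∑ a ∈ Ico 1 N, f a = ∑ x, f x := by
  rw [← sum_range_natCast, sum_range_eq_add_Ico _ (NeZero.pos N), Nat.cast_zero]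

lemma sum_Icc_one_natCast {M : Type*} [AddCommMonoid M] (f : ZMod N → M) :
    ∑ a ∈ Icc 1 N, f a = ∑ x, f x := by
  rw [← Ico_add_one_right_eq_Icc, sum_Ico_succ_top NeZero.one_le, natCast_self, add_comm,
    add_sum_Ico_one_natCast]

lemma exp_mul_sq_eq_stdAddChar (n : ℤ) (a : ℕ) :
    Complex.exp (2 * Real.pi * Complex.I * n * (a : ℂ) ^ 2 / N)
      = stdAddChar ((n : ZMod N) * (a : ZMod N) ^ 2) := by
  have h := stdAddChar_coe (N := N) (n * a ^ 2)
  push_cast at h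
  rw [h]
  ring_nf

end ZMod

lemma MulChar.mul_conj_apply {R : Type*} [CommRing R] [Finite Rˣ] (χ : MulChar R ℂ) {y : R}
    (hy : IsUnit y) : χ y * (starRingEnd ℂ) (χ y) = 1 := by
  rw [starRingEnd_apply, MulChar.star_apply', mul_comm, ← MulChar.mul_apply, MulChar.inv_mul,
    MulChar.one_apply hy]

section FiniteField

variable {F : Type*} [Field F] [Fintype F]

lemma sum_mulChar_mul_addChar_mul_sq_mul_conj {χ : MulChar F ℂ} (hχ : χ ≠ 1) (ψ : AddChar F ℂ)
    (n : F) :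
    (∑ x, χ x * ψ (n * x ^ 2)) * (starRingEnd ℂ) (∑ x, χ x * ψ (n * x ^ 2))
      = ∑ c, χ c * ∑ y, ψ (n * (c ^ 2 - 1) * y ^ 2) := by
  have hrow (y : F) : ∑ x, χ x * ψ (n * x ^ 2) * (starRingEnd ℂ) (χ y * ψ (n * y ^ 2))
      = ∑ c, χ c * ψ (n * (c ^ 2 - 1) * y ^ 2) := by
    rcases eq_or_ne y 0 with rfl | hy
    · simp [MulChar.map_zero, MulChar.sum_eq_zero_of_ne_one hχ]
    · refine (Fintype.sum_equiv (Equiv.mulLeft₀ y hy) _ _ fun c => ?_).symm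
      rw [Equiv.mulLeft₀_apply, map_mul (starRingEnd ℂ), ← AddChar.map_neg_eq_conj, map_mul χ]
      calc χ c * ψ (n * (c ^ 2 - 1) * y ^ 2)
          = (χ y * (starRingEnd ℂ) (χ y)) * χ c * (ψ (n * (y * c) ^ 2) * ψ (-(n * y ^ 2))) := by
            rw [χ.mul_conj_apply hy.isUnit, one_mul, ← AddChar.map_add_eq_mul]
            ring_nf
        _ = _ := by ring
  rw [map_sum, sum_mul_sum, sum_comm]
  simp_rw [hrow]
  rw [sum_comm]
  simp_rw [mul_sum]

variable [DecidableEq F] (hF : ringChar F ≠ 2)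
include hF

lemma sum_ite_sq_eq_one {M : Type*} [AddCommMonoid M] (f : F → M) :
    ∑ c, (if c ^ 2 = 1 then f c else 0) = f 1 + f (-1) := by
  have hroots : ({c | c ^ 2 = 1} : Finset F) = {1, -1} := by ext; simp
  rw [← sum_filter, hroots, sum_pair (Ring.neg_one_ne_one_of_char_ne_two hF).symm]

lemma sum_sq_eq_sum_one_add_quadraticChar {R : Type*} [CommRing R] (f : F → R) :
    ∑ y, f (y ^ 2) = ∑ t, (1 + quadraticChar F t : R) * f t := by
  rw [← sum_fiberwise univ (· ^ 2)]
  refine sum_congr rfl fun t _ => ?_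
  rw [sum_congr rfl fun y hy => congrArg f (mem_filter.1 hy).2, sum_const, nsmul_eq_mul]
  have hcard := congrArg (Int.cast : ℤ → R) (quadraticChar_card_sqrts hF t)
  rw [Set.toFinset_ofPred] at hcard
  push_cast at hcard
  rw [hcard, add_comm]

section QuadraticGaussSum

variable {R : Type*} [CommRing R]

lemma gaussSum_quadraticChar_mulShift (ψ : AddChar F R) (m : F) :
    gaussSum ((quadraticChar F).ringHomComp (Int.castRingHom R)) (ψ.mulShift m)
      = quadraticChar F m * gaussSum ((quadraticChar F).ringHomComp (Int.castRingHom R)) ψ := by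
  rcases eq_or_ne m 0 with rfl | hm
  · simpa [gaussSum] using congrArg (Int.cast : ℤ → R) (quadraticChar_sum_zero hF)
  · have hinv := ((quadraticChar_isQuadratic F).comp (Int.castRingHom R)).inv
    simpa [hinv] using
      gaussSum_mulShift_eq ((quadraticChar F).ringHomComp (Int.castRingHom R)) ψ (Units.mk0 m hm)

variable [IsDomain R] {ψ : AddChar F R} (hψ : ψ.IsPrimitive)
include hψ

lemma sum_addChar_mul_sq_eq_gaussSum (m : F) :
    ∑ y, ψ (m * y ^ 2) = (if m = 0 then (Fintype.card F : R) else 0)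
      + quadraticChar F m * gaussSum ((quadraticChar F).ringHomComp (Int.castRingHom R)) ψ := by
  rw [sum_sq_eq_sum_one_add_quadraticChar hF (fun t => ψ (m * t)),
    ← gaussSum_quadraticChar_mulShift hF]
  simp only [add_mul, one_mul, sum_add_distrib, gaussSum, AddChar.mulShift_apply,
    MulChar.ringHomComp_apply, eq_intCast]
  congr 1
  simpa [mul_comm] using AddChar.sum_mulShift m hψ

lemma sum_addChar_mul_sq_s18 (m : F) :
    ∑ y, ψ (m * y ^ 2) = (if m = 0 then (Fintype.card F : R) else 0)
      + quadraticChar F m * ∑ y, ψ (y ^ 2) := by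
  have hone := sum_addChar_mul_sq_eq_gaussSum hF hψ 1
  simp only [one_mul, one_ne_zero, if_false, zero_add, map_one, Int.cast_one] at hone
  rw [hone, sum_addChar_mul_sq_eq_gaussSum hF hψ]

end QuadraticGaussSum

theorem sq_norm_sum_mulChar_mul_addChar_mul_sq {χ : MulChar F ℂ} (hχ : χ ≠ 1)
    (hχ_even : χ (-1) = 1) {ψ : AddChar F ℂ} (hψ : ψ.IsPrimitive) {n : F} (hn : n ≠ 0) :
    (‖∑ x, χ x * ψ (n * x ^ 2)‖ ^ 2 : ℂ)
      = 2 * Fintype.card F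
        + quadraticChar F n * (∑ y, ψ (y ^ 2)) * ∑ c, χ c * quadraticChar F (c ^ 2 - 1) := by
  have hvanish (c : F) : n * (c ^ 2 - 1) = 0 ↔ c ^ 2 = 1 := by simp [hn, sub_eq_zero]
  rw [← Complex.mul_conj', sum_mulChar_mul_addChar_mul_sq_mul_conj hχ]
  simp only [sum_addChar_mul_sq_s18 hF hψ, hvanish, mul_add, sum_add_distrib, mul_ite, mul_zero,
    sum_ite_sq_eq_one hF, map_one, hχ_even, map_mul, Int.cast_mul]
  rw [mul_sum, ← two_mul, one_mul]
  exact congrArg _ (sum_congr rfl fun c _ => by ring)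

end FiniteField

section ZModTranslation

variable {p : ℕ} [NeZero p]

lemma gaussG_eq_sum_stdAddChar (n : ℤ) (χ : DirichletCharacter ℂ p) :
    gaussG n p χ = ∑ x, χ x * ZMod.stdAddChar ((n : ZMod p) * x ^ 2) := by
  rw [gaussG, ← ZMod.sum_Icc_one_natCast]
  simp only [ZMod.exp_mul_sq_eq_stdAddChar]

lemma sum_Icc_exp_sq_eq_sum_stdAddChar :
    ∑ a ∈ Icc 1 p, Complex.exp (2 * Real.pi * Complex.I * (a : ℂ) ^ 2 / p)
      = ∑ x : ZMod p, ZMod.stdAddChar (x ^ 2) := by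
  rw [← ZMod.sum_Icc_one_natCast]
  refine sum_congr rfl fun a _ => ?_
  simpa using ZMod.exp_mul_sq_eq_stdAddChar (N := p) 1 a

end ZModTranslation

lemma sum_Icc_mulChar_mul_legendreSym {p : ℕ} [Fact p.Prime] (χ : DirichletCharacter ℂ p) :
    ∑ a ∈ Icc 1 (p - 1), χ a * (legendreSym p ((a : ℤ) ^ 2 - 1) : ℂ)
      = ∑ c, χ c * quadraticChar (ZMod p) (c ^ 2 - 1) := by
  rw [← Ico_add_one_right_eq_Icc, Nat.sub_add_cancel NeZero.one_le,
    ← ZMod.add_sum_Ico_one_natCast, MulChar.map_zero, zero_mul, zero_add]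
  simp only [legendreSym, Int.cast_sub, Int.cast_pow, Int.cast_natCast, Int.cast_one]

/-- For an odd prime `p`, a non-principal even character `χ` mod `p`, and an
integer `n` coprime to `p`, one has
`|G(n,χ;p)|² = 2p + (n/p)·G(1;p)·Σ_{a=1}^{p-1} χ(a)·((a²−1)/p)`, where
`G(1;p) = Σ_{a=1}^{p} e^{2πi·a²/p}`. -/
theorem statement_18 (p : ℕ) [Fact p.Prime] (hp : p ≠ 2)
    (χ : DirichletCharacter ℂ p) (hχ : χ ≠ 1) (hχeven : χ (-1) = 1)
    (n : ℤ) (hn : Int.gcd n p = 1) :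
    ((‖gaussG n p χ‖) ^ 2 : ℂ)
      = 2 * (p : ℂ) + (legendreSym p n : ℂ)
          * (∑ a ∈ Finset.Icc 1 p, Complex.exp (2 * Real.pi * Complex.I * (a : ℂ) ^ 2 / p))
          * ∑ a ∈ Finset.Icc 1 (p - 1), χ a * (legendreSym p ((a : ℤ) ^ 2 - 1) : ℂ) := by
  have hF : ringChar (ZMod p) ≠ 2 := by rwa [ZMod.ringChar_zmod_n]
  have hn' : (n : ZMod p) ≠ 0 := ZMod.ne_zero_of_gcd_eq_one Fact.out hn
  rw [gaussG_eq_sum_stdAddChar, sum_Icc_exp_sq_eq_sum_stdAddChar,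
    sum_Icc_mulChar_mul_legendreSym,
    sq_norm_sum_mulChar_mul_addChar_mul_sq hF hχ hχeven (ZMod.isPrimitive_stdAddChar p) hn',
    ZMod.card, legendreSym]
end
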